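/- arXiv:2105.04849 — 3 statements merged into one kernel-verified Lean document; each statement's English description precedes it below -/
import Mathlib

section
/- Let X and Z be Banach spaces and T : X → Z an injective bounded linear operator. If T is not bounded below (i.e., there is no α > 0 with α‖x‖ ≤ ‖T x‖ for all x), then the range of the adjoint T* : Z* → X* is contained in a σ-porous subset of X*. -/
open Filter

/-- `A` is a porous subset of the metric space `α` with porosity constant `c`. -/
def Porous {α : Type*} [PseudoMetricSpace α] (A : Set α) (c : ℝ) : Prop :=
  ∀ a ∈ A, ∃ y : ℕ → α, Tendsto y atTop (nhds a) ∧
    ∀ n, Metric.closedBall (y n) (c * dist (y n) a) ∩ A = ∅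

/-- `A` is σ-porous: a countable union of porous sets. -/
def SigmaPorous {α : Type*} [PseudoMetricSpace α] (A : Set α) : Prop :=
  ∃ P : ℕ → Set α, (∀ n, ∃ c : ℝ, 0 < c ∧ c < 1 ∧ Porous (P n) c) ∧ A = ⋃ n, P n

open Metric

/- Porosity of the bounded pieces `{w ∘ T : ‖w‖ ≤ n}` of the range of `T*`: since `T` is not
bounded below, there are unit vectors `x` on which every functional of such a piece is tiny.
Moving from `a` by `r • f` with `f x = 1`, `‖f‖ = 1`, raises the value at `x` by `r`, and a ball of
radius `c r` around the new point cannot bring it back down to a tiny value. -/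

lemma LinearMap.exists_norm_eq_one_norm_apply_lt {X Z : Type*} [NormedAddCommGroup X]
    [NormedSpace ℝ X] [NormedAddCommGroup Z] [NormedSpace ℝ Z] (T : X →ₗ[ℝ] Z)
    (hT : ¬ ∃ α : ℝ, 0 < α ∧ ∀ x, α * ‖x‖ ≤ ‖T x‖) {ε : ℝ} (hε : 0 < ε) :
    ∃ x : X, ‖x‖ = 1 ∧ ‖T x‖ < ε := by
  push Not at hT
  obtain ⟨x, hx⟩ := hT ε hε
  have hx0 : 0 < ‖x‖ := norm_pos_iff.2 fun h => by simp [h] at hx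
  refine ⟨‖x‖⁻¹ • x, ?_, ?_⟩
  · rw [norm_smul, norm_inv, norm_norm, inv_mul_cancel₀ hx0.ne']
  · rw [map_smul, norm_smul, norm_inv, norm_norm, inv_mul_lt_iff₀ hx0, mul_comm]
    exact hx

section Dual

variable {X : Type*} [NormedAddCommGroup X] [NormedSpace ℝ X]

lemma closedBall_add_smul_inter_eq_empty {A : Set (StrongDual ℝ X)} {a f : StrongDual ℝ X}
    {x : X} {c r : ℝ} (ha : a ∈ A) (hx : ‖x‖ = 1) (hfx : f x = 1)
    (hA : ∀ b ∈ A, 2 * |b x| < (1 - c) * r) :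
    closedBall (a + r • f) (c * r) ∩ A = ∅ := by
  refine Set.eq_empty_iff_forall_notMem.2 fun u ⟨hu, huA⟩ => ?_
  have hux : |u x - (a x + r)| ≤ c * r := by
    calc |u x - (a x + r)| = |(u - (a + r • f)) x| := by simp [hfx]
      _ ≤ ‖u - (a + r • f)‖ * ‖x‖ := by simpa using (u - (a + r • f)).le_opNorm x
      _ ≤ c * r := by rw [hx, mul_one, ← dist_eq_norm]; exact hu
  have hu' := hA u huA
  have ha' := hA a ha
  rw [abs_le] at hux
  cases abs_cases (u x) <;> cases abs_cases (a x) <;> linarith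

lemma porous_of_forall_exists_norm_eq_one_abs_le {A : Set (StrongDual ℝ X)} {c : ℝ}
    (hc : c < 1) (hA : ∀ ε > 0, ∃ x : X, ‖x‖ = 1 ∧ ∀ b ∈ A, |b x| ≤ ε) : Porous A c := by
  intro a ha
  have hdata : ∀ k : ℕ, ∃ f : StrongDual ℝ X, ‖f‖ = 1 ∧
      closedBall (a + (1 / (k + 1) : ℝ) • f) (c * (1 / (k + 1))) ∩ A = ∅ := by
    intro k
    have hr : (0 : ℝ) < 1 / (k + 1) := by positivity
    obtain ⟨x, hx, hxA⟩ := hA ((1 - c) * (1 / (k + 1)) / 4) (by nlinarith)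
    obtain ⟨f, hf, hfx⟩ := exists_dual_vector ℝ x (by simp [hx])
    refine ⟨f, hf, closedBall_add_smul_inter_eq_empty ha hx (by simpa [hx] using hfx)
      fun b hb => ?_⟩
    have := hxA b hb
    nlinarith
  choose f hf_norm hf_ball using hdata
  have hdist : ∀ k : ℕ, dist (a + (1 / (k + 1) : ℝ) • f k) a = 1 / (k + 1) := by
    intro k
    rw [dist_eq_norm, add_sub_cancel_left, norm_smul, hf_norm, mul_one, Real.norm_eq_abs,
      abs_of_pos (by positivity)]
  refine ⟨fun k => a + (1 / (k + 1) : ℝ) • f k, ?_, fun k => by rw [hdist]; exact hf_ball k⟩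
  rw [tendsto_iff_dist_tendsto_zero]
  simpa only [hdist] using tendsto_one_div_add_atTop_nhds_zero_nat

end Dual

lemma porous_image_comp_closedBall {X Z : Type*} [NormedAddCommGroup X] [NormedSpace ℝ X]
    [NormedAddCommGroup Z] [NormedSpace ℝ Z] (T : X →L[ℝ] Z)
    (hT : ∀ ε > 0, ∃ x : X, ‖x‖ = 1 ∧ ‖T x‖ < ε) (R : ℝ) {c : ℝ} (hc : c < 1) :
    Porous ((fun w : StrongDual ℝ Z => w.comp T) '' closedBall 0 R) c := by
  refine porous_of_forall_exists_norm_eq_one_abs_le hc fun ε hε => ?_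
  obtain ⟨x, hx, hTx⟩ := hT (ε / (|R| + 1)) (by positivity)
  refine ⟨x, hx, ?_⟩
  rintro _ ⟨w, hw, rfl⟩
  rw [mem_closedBall_zero_iff] at hw
  calc |w (T x)| ≤ ‖w‖ * ‖T x‖ := by simpa using w.le_opNorm (T x)
    _ ≤ (|R| + 1) * (ε / (|R| + 1)) := by
      gcongr
      · linarith [le_abs_self R]
    _ = ε := by field_simp

open NormedSpace in
theorem stmt6_general {X Z : Type*} [NormedAddCommGroup X] [NormedSpace ℝ X]
    [NormedAddCommGroup Z] [NormedSpace ℝ Z]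
    (T : X →L[ℝ] Z)
    (hnb : ¬ ∃ α : ℝ, 0 < α ∧ ∀ x, α * ‖x‖ ≤ ‖T x‖) :
    ∃ A : Set (StrongDual ℝ X), SigmaPorous A ∧
      (Set.range fun z' : StrongDual ℝ Z => z'.comp T) ⊆ A := by
  have hsmall : ∀ ε > 0, ∃ x : X, ‖x‖ = 1 ∧ ‖T x‖ < ε := fun ε hε =>
    T.toLinearMap.exists_norm_eq_one_norm_apply_lt hnb hε
  refine ⟨⋃ n : ℕ, (fun w : StrongDual ℝ Z => w.comp T) '' closedBall 0 n,
    ⟨_, fun n => ⟨1 / 2, by norm_num, by norm_num,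
      porous_image_comp_closedBall T hsmall n (by norm_num)⟩, rfl⟩, ?_⟩
  rintro _ ⟨w, rfl⟩
  obtain ⟨n, hn⟩ := exists_nat_ge ‖w‖
  exact Set.mem_iUnion.2 ⟨n, w, mem_closedBall_zero_iff.2 hn, rfl⟩

open NormedSpace in
theorem stmt6 {X Z : Type*} [NormedAddCommGroup X] [NormedSpace ℝ X] [CompleteSpace X]
    [NormedAddCommGroup Z] [NormedSpace ℝ Z] [CompleteSpace Z]
    (T : X →L[ℝ] Z) (hT : Function.Injective T)
    (hnb : ¬ ∃ α : ℝ, 0 < α ∧ ∀ x, α * ‖x‖ ≤ ‖T x‖) :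
    ∃ A : Set (StrongDual ℝ X), SigmaPorous A ∧
      (Set.range fun z' : StrongDual ℝ Z => z'.comp T) ⊆ A :=
  stmt6_general T hnb
end

section
/- Let X be a normed space and φ : X → [0,∞) a function with φ(λx) = |λ|φ(x) for all scalars λ and φ(x) = 0 iff x = 0. Let C_φ = { x : φ(x) ≤ 1 }. Then the following are equivalent: (i) the barrier cone B(C_φ) = { x* ∈ X* : sup_{x ∈ C_φ} x*(x) < ∞ } is not all of X*; (ii) C_φ is unbounded; (iii) B(C_φ) is a σ-porous subset of X*. -/
open Filter

/-- A porous set (with positive constant) in a metric space is nowhere dense. -/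
lemma Porous.isNowhereDense {α : Type*} [MetricSpace α] {A : Set α} {c : ℝ}
    (hc : 0 < c) (hA : Porous A c) : IsNowhereDense A := by
  rw [IsNowhereDense]
  by_contra h
  obtain ⟨z, hz⟩ := Set.nonempty_iff_ne_empty.2 h
  obtain ⟨ε, hε, hball⟩ := Metric.isOpen_iff.1 isOpen_interior z hz
  have hzcl : z ∈ closure A := interior_subset hz
  obtain ⟨a, haA, hadist⟩ := Metric.mem_closure_iff.1 hzcl (ε/2) (by linarith)
  obtain ⟨y, hy, hyball⟩ := hA a haA
  have : ∀ᶠ n in atTop, dist (y n) a < ε/2 := by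
    have := Metric.tendsto_nhds.1 hy (ε/2) (by linarith)
    exact this
  obtain ⟨n, hn⟩ := this.exists
  have hyn : y n ∈ closure A := by
    apply interior_subset
    apply hball
    rw [Metric.mem_ball]
    calc dist (y n) z ≤ dist (y n) a + dist a z := dist_triangle _ _ _
      _ < ε/2 + ε/2 := by rw [dist_comm a z]; linarith
      _ = ε := by ring
  rcases eq_or_lt_of_le (dist_nonneg (x := y n) (y := a)) with hd | hd
  · -- dist = 0, so y n = a ∈ A, but closed ball of radius 0 around y n misses A
    have hya : y n = a := dist_eq_zero.1 hd.symm
    have : a ∈ Metric.closedBall (y n) (c * dist (y n) a) ∩ A :=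
      ⟨by simp [hya], haA⟩
    rw [hyball n] at this
    exact this
  · -- open ball around y n of positive radius misses A, contradicting y n ∈ closure A
    have hrad : 0 < c * dist (y n) a := mul_pos hc hd
    obtain ⟨b, hb1, hb2⟩ := Metric.mem_closure_iff.1 hyn (c * dist (y n) a) hrad
    have : b ∈ Metric.closedBall (y n) (c * dist (y n) a) ∩ A :=
      ⟨Metric.mem_closedBall.2 (by rw [dist_comm]; exact hb2.le), hb1⟩
    rw [hyball n] at this
    exact this

/-- A porous set is meagre. -/
lemma Porous.isMeagre {α : Type*} [MetricSpace α] {A : Set α} {c : ℝ}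
    (hc : 0 < c) (hA : Porous A c) : IsMeagre A := by
  rw [isMeagre_iff_countable_union_isNowhereDense]
  exact ⟨{A}, by simpa using hA.isNowhereDense hc, Set.countable_singleton _,
    by simp⟩

lemma SigmaPorous.isMeagre {α : Type*} [MetricSpace α] {A : Set α}
    (hA : SigmaPorous A) : IsMeagre A := by
  obtain ⟨P, hP, rfl⟩ := hA
  refine isMeagre_iUnion fun n => ?_
  obtain ⟨c, hc0, _, hp⟩ := hP n
  exact hp.isMeagre hc0

lemma SigmaPorous.ne_univ {α : Type*} [MetricSpace α] [CompleteSpace α] [Nonempty α]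
    {A : Set α} (hA : SigmaPorous A) : A ≠ Set.univ := by
  intro h
  have hm : IsMeagre (Set.univ : Set α) := h ▸ hA.isMeagre
  rw [IsMeagre, Set.compl_univ] at hm
  have : Dense (∅ : Set α) := dense_of_mem_residual hm
  simpa using this.nonempty

open NormedSpace in
/-- The key porosity construction: if `C_φ` is unbounded, each slice `B_n` of the barrier
cone is porous with constant `1/2`. -/
lemma barrier_slice_porous {X : Type*} [NormedAddCommGroup X] [NormedSpace ℝ X]
    (φ : X → ℝ) (hsymm : ∀ x, φ (-x) = φ x)
    (hub : ∀ M : ℝ, ∃ x, φ x ≤ 1 ∧ M < ‖x‖) (n : ℕ) :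
    Porous {x' : StrongDual ℝ X | ∀ x, φ x ≤ 1 → x' x ≤ (n : ℝ)} (1/2) := by
  intro a ha
  have hx : ∀ k : ℕ, ∃ x : X, φ x ≤ 1 ∧ 8*((n:ℝ)+1)*((k:ℝ)+1) < ‖x‖ := fun k => hub _
  choose x hx1 hx2 using hx
  have hKpos : ∀ k : ℕ, (0:ℝ) < (k:ℝ)+1 := fun k => by positivity
  have hxpos : ∀ k, (0:ℝ) < ‖x k‖ := fun k =>
    lt_trans (by positivity) (hx2 k)
  have hxne : ∀ k, x k ≠ 0 := fun k => norm_pos_iff.1 (hxpos k)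
  have hf : ∀ k, ∃ g : StrongDual ℝ X, ‖g‖ = 1 ∧ g (x k) = ‖x k‖ := fun k => by
    obtain ⟨g, hg1, hg2⟩ := exists_dual_vector ℝ (x k) (norm_ne_zero_iff.2 (hxne k))
    exact ⟨g, hg1, by exact_mod_cast hg2⟩
  choose f hf1 hf2 using hf
  set ρ : ℕ → ℝ := fun k => (2*((k:ℝ)+1))⁻¹ with hρdef
  have hρpos : ∀ k, 0 < ρ k := fun k => by
    have := hKpos k; positivity
  set y : ℕ → StrongDual ℝ X := fun k => a + (ρ k) • f k with hydef
  have hdist : ∀ k, dist (y k) a = ρ k := by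
    intro k
    rw [dist_eq_norm]
    have : y k - a = (ρ k) • f k := by simp [hydef]
    rw [this, norm_smul, hf1 k, Real.norm_eq_abs, abs_of_pos (hρpos k), mul_one]
  refine ⟨y, ?_, ?_⟩
  · rw [tendsto_iff_norm_sub_tendsto_zero]
    have heq : (fun k : ℕ => ‖y k - a‖) = ρ := by
      funext k
      have := hdist k
      rwa [dist_eq_norm] at this
    rw [heq, hρdef]
    refine Tendsto.inv_tendsto_atTop ?_
    refine tendsto_atTop_mono (f := fun k : ℕ => (k : ℝ)) (fun k => ?_)
      tendsto_natCast_atTop_atTop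
    have : (0:ℝ) ≤ (k:ℝ) := Nat.cast_nonneg k
    linarith
  · intro k
    rw [Set.eq_empty_iff_forall_notMem]
    rintro g ⟨hg1, hg2⟩
    rw [Metric.mem_closedBall, hdist k] at hg1
    -- bound on (g - y k)(x k)
    have hop : ‖(g - y k) (x k)‖ ≤ ‖g - y k‖ * ‖x k‖ := (g - y k).le_opNorm (x k)
    have hgy : ‖g - y k‖ ≤ 1/2 * ρ k := by rwa [dist_eq_norm] at hg1
    have hbound : -(1/2 * ρ k * ‖x k‖) ≤ (g - y k) (x k) := by
      have h1 : ‖(g - y k) (x k)‖ ≤ 1/2 * ρ k * ‖x k‖ :=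
        hop.trans (mul_le_mul_of_nonneg_right hgy (norm_nonneg _))
      have h2 := neg_abs_le ((g - y k) (x k))
      rw [Real.norm_eq_abs] at h1
      linarith
    have hgval : g (x k) = a (x k) + ρ k * ‖x k‖ + (g - y k) (x k) := by
      have : (g - y k) (x k) = g (x k) - y k (x k) := by simp
      have hy : y k (x k) = a (x k) + ρ k * (f k (x k)) := by simp [hydef]
      rw [this, hy, hf2 k]; ring
    have han : -(n:ℝ) ≤ a (x k) := by
      have h1 : φ (-(x k)) ≤ 1 := by rw [hsymm]; exact hx1 k
      have := ha _ h1
      rw [map_neg] at this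
      linarith
    have hgn : g (x k) ≤ (n:ℝ) := hg2 _ (hx1 k)
    have hρt : 4*((n:ℝ)+1) < ρ k * ‖x k‖ := by
      have h1 : ρ k * (8*((n:ℝ)+1)*((k:ℝ)+1)) < ρ k * ‖x k‖ :=
        mul_lt_mul_of_pos_left (hx2 k) (hρpos k)
      have h2 : ρ k * (8*((n:ℝ)+1)*((k:ℝ)+1)) = 4*((n:ℝ)+1) := by
        rw [hρdef]
        field_simp
        ring
      linarith
    nlinarith [hbound, hgval, han, hgn, hρt]

open NormedSpace in
theorem stmt8 {X : Type*} [NormedAddCommGroup X] [NormedSpace ℝ X]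
    (φ : X → ℝ) (hnn : ∀ x, 0 ≤ φ x)
    (hhom : ∀ (a : ℝ) (x : X), φ (a • x) = |a| * φ x)
    (hzero : ∀ x, φ x = 0 ↔ x = 0) :
    ({x' : StrongDual ℝ X | ∃ C : ℝ, ∀ x, φ x ≤ 1 → x' x ≤ C} ≠ Set.univ ↔
        ¬ ∃ M : ℝ, ∀ x, φ x ≤ 1 → ‖x‖ ≤ M) ∧
    ({x' : StrongDual ℝ X | ∃ C : ℝ, ∀ x, φ x ≤ 1 → x' x ≤ C} ≠ Set.univ ↔
        SigmaPorous {x' : StrongDual ℝ X | ∃ C : ℝ, ∀ x, φ x ≤ 1 → x' x ≤ C}) := by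
  set B : Set (StrongDual ℝ X) := {x' : StrongDual ℝ X | ∃ C : ℝ, ∀ x, φ x ≤ 1 → x' x ≤ C} with hBdef
  have hsymm : ∀ x, φ (-x) = φ x := fun x => by
    have := hhom (-1) x
    simpa using this
  -- (a) bounded → B = univ
  have hbd : (∃ M : ℝ, ∀ x, φ x ≤ 1 → ‖x‖ ≤ M) → B = Set.univ := by
    rintro ⟨M, hM⟩
    rw [Set.eq_univ_iff_forall]
    intro x'
    refine ⟨‖x'‖ * M, fun x hx => ?_⟩
    calc x' x ≤ |x' x| := le_abs_self _
      _ = ‖x' x‖ := (Real.norm_eq_abs _).symm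
      _ ≤ ‖x'‖ * ‖x‖ := x'.le_opNorm x
      _ ≤ ‖x'‖ * M := mul_le_mul_of_nonneg_left (hM x hx) (norm_nonneg _)
  -- (b) unbounded → SigmaPorous B
  have hpor : (¬ ∃ M : ℝ, ∀ x, φ x ≤ 1 → ‖x‖ ≤ M) → SigmaPorous B := by
    intro h
    push_neg at h
    have hub : ∀ M : ℝ, ∃ x, φ x ≤ 1 ∧ M < ‖x‖ := h
    refine ⟨fun n => {x' : StrongDual ℝ X | ∀ x, φ x ≤ 1 → x' x ≤ (n : ℝ)},
      fun n => ⟨1/2, by norm_num, by norm_num, barrier_slice_porous φ hsymm hub n⟩, ?_⟩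
    ext x'
    simp only [hBdef, Set.mem_setOf_eq, Set.mem_iUnion]
    constructor
    · rintro ⟨C, hC⟩
      exact ⟨⌈C⌉₊, fun x hx => (hC x hx).trans (Nat.le_ceil C)⟩
    · rintro ⟨n, hn⟩
      exact ⟨(n : ℝ), hn⟩
  -- (c) SigmaPorous B → B ≠ univ
  have hne : SigmaPorous B → B ≠ Set.univ := fun h => h.ne_univ
  refine ⟨⟨fun h hM => h (hbd hM), fun h => hne (hpor h)⟩,
    ⟨fun h => hpor (fun hM => h (hbd hM)), fun h => hne h⟩⟩
end

section
/- Let (X,d) be a metric space with base point, Y a Banach space, and F a nonempty convex cone in Lip_0(X,Y) with the property (P): there is K > 0 such that for every pair (x,x') ∈ X × X there exists p ∈ F with ‖p‖_L ≤ K and ‖p(x) - p(x')‖ = d(x,x'). Let φ : X × X → [0,∞) satisfy φ(x,x') = 0 iff x = x'. If inf{ φ(x,x')/d(x,x') : x ≠ x' } = 0, then for every s > 0 the set N_{φ,s}(F) = { f ∈ F : ‖f(x)-f(x')‖ ≤ s·φ(x,x') for all x,x' } is a porous subset of (F, ‖·‖_L) with porosity constant 1/(2K). -/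
open Filter

/-- `d` is a metric on `X`. -/
structure IsMetric {X : Type*} (d : X → X → ℝ) : Prop where
  refl : ∀ x, d x x = 0
  eq_of : ∀ {x y}, d x y = 0 → x = y
  symm : ∀ x y, d x y = d y x
  triangle : ∀ x y z, d x z ≤ d x y + d y z

/-- The Lipschitz constant (norm) of `f` with respect to the distance `d`. -/
noncomputable def lipNorm {X Y : Type*} [SeminormedAddCommGroup Y]
    (d : X → X → ℝ) (f : X → Y) : ℝ :=
  sSup {r : ℝ | ∃ x x' : X, x ≠ x' ∧ r = ‖f x - f x'‖ / d x x'}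

/-- `A` is a porous subset of the metric space `(F, ρ)` with porosity constant `c`:
for every `a ∈ A` there is a sequence `(yₙ) ⊆ F` with `ρ (yₙ) a → 0` such that the
closed ball `B(yₙ, c · ρ (yₙ, a))` (taken in `F`) does not meet `A`. -/
def PorousIn {α : Type*} (ρ : α → α → ℝ) (F : Set α) (A : Set α) (c : ℝ) : Prop :=
  ∀ a ∈ A, ∃ y : ℕ → α, (∀ n, y n ∈ F) ∧
    Tendsto (fun n => ρ (y n) a) atTop (nhds 0) ∧
    ∀ n, ∀ g ∈ F, ρ (y n) g ≤ c * ρ (y n) a → g ∉ A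

/-- `A` is a σ-porous subset of `(F, ρ)`: a countable union of porous subsets. -/
def SigmaPorousIn {α : Type*} (ρ : α → α → ℝ) (F : Set α) (A : Set α) : Prop :=
  ∃ P : ℕ → Set α, (∀ n, ∃ c : ℝ, 0 < c ∧ c < 1 ∧ PorousIn ρ F (P n) c) ∧ A = ⋃ n, P n

section Helpers

variable {X Y : Type*} [MetricSpace X] [SeminormedAddCommGroup Y]

lemma lipNorm_nonneg' (f : X → Y) : 0 ≤ lipNorm (fun a b : X => dist a b) f := by
  apply Real.sSup_nonneg
  rintro r ⟨x, x', hx, rfl⟩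
  positivity

lemma lipSet_bddAbove {f : X → Y} {L : ℝ} (h : ∀ x x', ‖f x - f x'‖ ≤ L * dist x x') :
    BddAbove {r : ℝ | ∃ x x' : X, x ≠ x' ∧ r = ‖f x - f x'‖ / dist x x'} := by
  refine ⟨max L 0, ?_⟩
  rintro r ⟨x, x', hx, rfl⟩
  have hd : 0 < dist x x' := dist_pos.2 hx
  exact le_max_of_le_left ((div_le_iff₀ hd).2 (h x x'))

lemma lipNorm_le' {f : X → Y} {L : ℝ} (hL : 0 ≤ L)
    (h : ∀ x x', ‖f x - f x'‖ ≤ L * dist x x') :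
    lipNorm (fun a b : X => dist a b) f ≤ L := by
  apply Real.sSup_le _ hL
  rintro r ⟨x, x', hx, rfl⟩
  exact (div_le_iff₀ (dist_pos.2 hx)).2 (h x x')

lemma le_lipNorm' {f : X → Y} {L : ℝ} (h : ∀ x x', ‖f x - f x'‖ ≤ L * dist x x')
    {x x' : X} (hx : x ≠ x') :
    ‖f x - f x'‖ / dist x x' ≤ lipNorm (fun a b : X => dist a b) f :=
  le_csSup (lipSet_bddAbove h) ⟨x, x', hx, rfl⟩

lemma norm_sub_le_lipNorm' {f : X → Y} {L : ℝ} (h : ∀ x x', ‖f x - f x'‖ ≤ L * dist x x')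
    (x x' : X) : ‖f x - f x'‖ ≤ lipNorm (fun a b : X => dist a b) f * dist x x' := by
  rcases eq_or_ne x x' with rfl | hx
  · simp
  · have hd : 0 < dist x x' := dist_pos.2 hx
    have h1 := le_lipNorm' h hx
    calc ‖f x - f x'‖ = ‖f x - f x'‖ / dist x x' * dist x x' := by field_simp
      _ ≤ _ := mul_le_mul_of_nonneg_right h1 hd.le

end Helpers

theorem stmt13 {X Y : Type*} [MetricSpace X] [NormedAddCommGroup Y] [NormedSpace ℝ Y]
    [CompleteSpace Y] (x₀ : X) (F : Set (X → Y)) (hne : F.Nonempty)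
    (hsub : ∀ f ∈ F, f x₀ = 0 ∧ ∃ L : ℝ, ∀ x x', ‖f x - f x'‖ ≤ L * dist x x')
    (hadd : ∀ f ∈ F, ∀ g ∈ F, f + g ∈ F)
    (hsmul : ∀ f ∈ F, ∀ t : ℝ, 0 ≤ t → t • f ∈ F)
    (K : ℝ) (hK : 0 < K)
    (hP : ∀ x x' : X, ∃ p ∈ F,
      lipNorm (fun a b : X => dist a b) p ≤ K ∧ ‖p x - p x'‖ = dist x x')
    (φ : X → X → ℝ) (hφnn : ∀ x x', 0 ≤ φ x x') (hφ0 : ∀ x x', φ x x' = 0 ↔ x = x')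
    (hinf : ∀ ε > (0 : ℝ), ∃ x x' : X, x ≠ x' ∧ φ x x' < ε * dist x x') :
    ∀ s > (0 : ℝ),
      PorousIn (fun f g => lipNorm (fun a b : X => dist a b) (f - g)) F
        {f ∈ F | ∀ x x', ‖f x - f x'‖ ≤ s * φ x x'} (1 / (2 * K)) := by
  intro s hs a haA
  obtain ⟨haF, haBound⟩ := haA
  obtain ⟨La, hLa⟩ := (hsub a haF).2
  have hsel : ∀ n : ℕ, ∃ x x' : X, x ≠ x' ∧
      φ x x' < ((1 : ℝ) / (n + 1)) / (4 * s) * dist x x' := by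
    intro n
    apply hinf
    positivity
  choose xs xs' hxs hφs using hsel
  choose p hpF hpK hpd using fun n => hP (xs n) (xs' n)
  choose Lp hLp using fun n => (hsub (p n) (hpF n)).2
  have htpos : ∀ n : ℕ, (0 : ℝ) < 1 / (n + 1) := fun n => by positivity
  have hpKd : ∀ n (u v : X), ‖p n u - p n v‖ ≤ K * dist u v := fun n u v =>
    (norm_sub_le_lipNorm' (hLp n) u v).trans
      (mul_le_mul_of_nonneg_right (hpK n) dist_nonneg)
  set y : ℕ → X → Y := fun n => a + ((1 : ℝ) / (n + 1)) • p n with hy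
  have hyF : ∀ n, y n ∈ F := fun n =>
    hadd a haF _ (hsmul (p n) (hpF n) _ (htpos n).le)
  have hya : ∀ n, y n - a = ((1 : ℝ) / (n + 1)) • p n := by
    intro n; ext u; simp [hy]
  have hsb : ∀ (n : ℕ) (u v : X),
      ‖(((1 : ℝ) / ((n : ℝ) + 1)) • p n) u - (((1 : ℝ) / ((n : ℝ) + 1)) • p n) v‖
        ≤ ((1 : ℝ) / ((n : ℝ) + 1) * K) * dist u v := by
    intro n u v
    have e : (((1 : ℝ) / ((n : ℝ) + 1)) • p n) u - (((1 : ℝ) / ((n : ℝ) + 1)) • p n) v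
        = ((1 : ℝ) / ((n : ℝ) + 1)) • (p n u - p n v) := by
      simp [smul_sub]
    rw [e, norm_smul, Real.norm_eq_abs, abs_of_pos (htpos n), mul_assoc]
    exact mul_le_mul_of_nonneg_left (hpKd n u v) (htpos n).le
  have hsnorm : ∀ (n : ℕ),
      ‖(((1 : ℝ) / ((n : ℝ) + 1)) • p n) (xs n) - (((1 : ℝ) / ((n : ℝ) + 1)) • p n) (xs' n)‖
        = (1 : ℝ) / ((n : ℝ) + 1) * dist (xs n) (xs' n) := by
    intro n
    have e : (((1 : ℝ) / ((n : ℝ) + 1)) • p n) (xs n) - (((1 : ℝ) / ((n : ℝ) + 1)) • p n) (xs' n)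
        = ((1 : ℝ) / ((n : ℝ) + 1)) • (p n (xs n) - p n (xs' n)) := by
      simp [smul_sub]
    rw [e, norm_smul, Real.norm_eq_abs, abs_of_pos (htpos n), hpd n]
  have hρa_le : ∀ n, lipNorm (fun a b : X => dist a b) (y n - a) ≤ (1 : ℝ) / (n + 1) * K := by
    intro n
    rw [hya n]
    exact lipNorm_le' (by positivity) (hsb n)
  refine ⟨y, hyF, ?_, ?_⟩
  · apply squeeze_zero (fun n => lipNorm_nonneg' _) hρa_le
    have := tendsto_one_div_add_atTop_nhds_zero_nat.mul_const K
    simpa using this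
  · intro n g hgF hρ hgA
    obtain ⟨-, hgBound⟩ := hgA
    obtain ⟨Lg, hLg⟩ := (hsub g hgF).2
    have hd : (0 : ℝ) < dist (xs n) (xs' n) := dist_pos.2 (hxs n)
    set x := xs n with hxdef
    set x' := xs' n with hx'def
    -- pointwise Lipschitz bound for y n - g
    have hkey : ∀ u v : X, ‖(y n - g) u - (y n - g) v‖ ≤ (La + ((1 : ℝ) / ((n : ℝ) + 1) * K) + Lg) * dist u v := by
      intro u v
      have e : (y n - g) u - (y n - g) v
          = (a u - a v) + ((((1 : ℝ) / ((n : ℝ) + 1)) • p n) u - (((1 : ℝ) / ((n : ℝ) + 1)) • p n) v) - (g u - g v) := by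
        simp only [hy, Pi.sub_apply, Pi.add_apply]
        abel
      rw [e]
      have h1 : ‖(a u - a v) + ((((1 : ℝ) / ((n : ℝ) + 1)) • p n) u - (((1 : ℝ) / ((n : ℝ) + 1)) • p n) v) - (g u - g v)‖
          ≤ ‖a u - a v‖ + ‖(((1 : ℝ) / ((n : ℝ) + 1)) • p n) u - (((1 : ℝ) / ((n : ℝ) + 1)) • p n) v‖ + ‖g u - g v‖ :=
        (norm_sub_le _ _).trans (by gcongr; exact norm_add_le _ _)
      have h2 := hLa u v
      have h3 := hsb n u v
      have h4 := hLg u v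
      have hdd : (0:ℝ) ≤ dist u v := dist_nonneg
      linarith [h1, h2, h3, h4]
    -- the key quantities
    have hN4 : ‖(y n - g) x - (y n - g) x'‖ ≤ (1 : ℝ) / ((n : ℝ) + 1) / 2 * dist x x' := by
      have h1 := norm_sub_le_lipNorm' hkey x x'
      have h2 : lipNorm (fun a b : X => dist a b) (y n - g) ≤ (1 : ℝ) / ((n : ℝ) + 1) / 2 := by
        have h3 : (1 / (2 * K)) * lipNorm (fun a b : X => dist a b) (y n - a)
            ≤ (1 / (2 * K)) * ((1 : ℝ) / ((n : ℝ) + 1) * K) :=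
          mul_le_mul_of_nonneg_left (hρa_le n) (by positivity)
        have h4 : (1 / (2 * K)) * ((1 : ℝ) / ((n : ℝ) + 1) * K) = (1 : ℝ) / ((n : ℝ) + 1) / 2 := by field_simp
        have h5 := le_trans hρ h3
        linarith [h5, h4.le, h4.ge]
      exact h1.trans (mul_le_mul_of_nonneg_right h2 dist_nonneg)
    have hA1 : ‖a x - a x'‖ ≤ s * φ x x' := haBound x x'
    have hA2 : ‖g x - g x'‖ ≤ s * φ x x' := hgBound x x'
    have hA3 : s * φ x x' < (1 : ℝ) / ((n : ℝ) + 1) * dist x x' / 4 := by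
      have h1 : s * φ x x' < s * ((1 : ℝ) / ((n : ℝ) + 1) / (4 * s) * dist x x') :=
        mul_lt_mul_of_pos_left (hφs n) hs
      have h2 : s * ((1 : ℝ) / ((n : ℝ) + 1) / (4 * s) * dist x x') = (1 : ℝ) / ((n : ℝ) + 1) * dist x x' / 4 := by
        field_simp
      linarith
    have hA4 : (1 : ℝ) / ((n : ℝ) + 1) * dist x x' ≤ ‖y n x - y n x'‖ + ‖a x - a x'‖ := by
      have e : (((1 : ℝ) / ((n : ℝ) + 1)) • p n) x - (((1 : ℝ) / ((n : ℝ) + 1)) • p n) x' = (y n x - y n x') - (a x - a x') := by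
        simp only [hy, Pi.add_apply]
        abel
      have h1 := hsnorm n
      rw [e] at h1
      calc (1 : ℝ) / ((n : ℝ) + 1) * dist x x' = ‖(y n x - y n x') - (a x - a x')‖ := h1.symm
        _ ≤ _ := norm_sub_le _ _
    have hA5 : ‖y n x - y n x'‖ ≤ ‖(y n - g) x - (y n - g) x'‖ + ‖g x - g x'‖ := by
      have e : y n x - y n x' = ((y n - g) x - (y n - g) x') + (g x - g x') := by
        simp only [Pi.sub_apply]
        abel
      rw [e]
      exact norm_add_le _ _
    linarith [hA1, hA2, hA3, hA4, hA5, hN4]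
end
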